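/- arXiv:2111.09949 — 4 statements merged into one kernel-verified Lean document; each statement's English description precedes it below -/
import Mathlib

section
/- Let A ∈ ℤ^{n×n} be nonsingular with Smith form S = diag(s_1,…,s_n), and let M ∈ ℤ^{n×n} be a Smith massager for A. Fix an index i and an integer c with gcd(c, s_i) = 1. Then the matrix obtained from M by multiplying column i of M by c is also a Smith massager for A; likewise, if c divides every entry of column i of M, then the matrix obtained from M by dividing column i of M by c is also a Smith massager for A. -/
open Matrix

/-- A square integer matrix is unimodular if its determinant is `±1`. -/
def IsUnimodular {ι : Type*} [Fintype ι] [DecidableEq ι] (U : Matrix ι ι ℤ) : Prop :=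
  U.det = 1 ∨ U.det = -1

/-- `S` is a Smith form of `A`: it is diagonal with positive diagonal entries
forming a divisibility chain, and `P * A * Q = S` for some unimodular `P`, `Q`. -/
def IsSmithForm {n : ℕ} (A S : Matrix (Fin n) (Fin n) ℤ) : Prop :=
  (∀ i j : Fin n, i ≠ j → S i j = 0) ∧ (∀ i, 0 < S i i) ∧
  (∀ i j : Fin n, i ≤ j → S i i ∣ S j j) ∧
  ∃ P Q : Matrix (Fin n) (Fin n) ℤ, IsUnimodular P ∧ IsUnimodular Q ∧ P * A * Q = S

/-- `B ≡ C (colmod S)`: column `j` of `B` is congruent to column `j` of `C`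
modulo the `j`-th diagonal entry of `S`. -/
def ColMod {ι : Type*} [Fintype ι] (S B C : Matrix ι ι ℤ) : Prop :=
  ∀ i j, S j j ∣ (B i j - C i j)

/-- `M` is a Smith massager for `A` (with Smith form `S`):
`A * M ≡ 0 (colmod S)` and `W * M ≡ I (colmod S)` for some integer matrix `W`. -/
def IsSmithMassager {ι : Type*} [Fintype ι] [DecidableEq ι] (A S M : Matrix ι ι ℤ) : Prop :=
  ColMod S (A * M) 0 ∧ ∃ W : Matrix ι ι ℤ, ColMod S (W * M) 1

/-!
Scaling column `i` by `c` is right multiplication by `D = diag(1, …, c, …, 1)`, and dividing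
column `i` by `c` is the inverse operation. Since each diagonal entry of `D` is a unit modulo the
matching `s_j`, congruences colmod `S` can be multiplied by `D` on the right and also cancelled;
the witness `W` for `M` becomes `D' W` for `M D`, where `D'` inverts `D` entrywise modulo the `s_j`,
and a witness `W` for `M D` gives `D W` for `M`.
-/

namespace ColMod

variable {ι : Type*} [Fintype ι] {S B C : Matrix ι ι ℤ}

theorem trans {E : Matrix ι ι ℤ} (hBC : ColMod S B C) (hCE : ColMod S C E) : ColMod S B E :=
  fun r j => by simpa using dvd_add (hBC r j) (hCE r j)

theorem mul_left (X : Matrix ι ι ℤ) (h : ColMod S B C) : ColMod S (X * B) (X * C) := by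
  intro r j
  simp only [mul_apply, ← Finset.sum_sub_distrib, ← mul_sub]
  exact Finset.dvd_sum fun k _ => (h k j).mul_left _

variable [DecidableEq ι]

theorem mul_diagonal (d : ι → ℤ) (h : ColMod S B C) :
    ColMod S (B * diagonal d) (C * diagonal d) := by
  intro r j
  simpa only [Matrix.mul_diagonal, ← sub_mul] using (h r j).mul_right _

theorem of_mul_diagonal {d : ι → ℤ} (hd : ∀ j, IsCoprime (d j) (S j j))
    (h : ColMod S (B * diagonal d) (C * diagonal d)) : ColMod S B C := by
  intro r j
  have := h r j
  simp only [Matrix.mul_diagonal, ← sub_mul] at this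
  exact (hd j).symm.dvd_of_dvd_mul_right this

theorem diagonal_one {d : ι → ℤ} (hd : ∀ j, S j j ∣ d j - 1) : ColMod S (diagonal d) 1 := by
  intro r j
  by_cases hrj : r = j
  · subst hrj
    simpa using hd r
  · simp [diagonal_apply_ne _ hrj, one_apply_ne hrj]

end ColMod

theorem isSmithMassager_mul_diagonal_iff {ι : Type*} [Fintype ι] [DecidableEq ι]
    {A S M : Matrix ι ι ℤ} {d : ι → ℤ} (hd : ∀ j, IsCoprime (d j) (S j j)) :
    IsSmithMassager A S (M * diagonal d) ↔ IsSmithMassager A S M := by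
  constructor
  · rintro ⟨hAM, W, hWM⟩
    refine ⟨.of_mul_diagonal hd (by simpa [← Matrix.mul_assoc] using hAM), diagonal d * W,
      .of_mul_diagonal hd ?_⟩
    -- `D W M D ≡ D · 1 = 1 · D`, then cancel `D` on the right.
    simpa [Matrix.mul_assoc] using hWM.mul_left (diagonal d)
  · rintro ⟨hAM, W, hWM⟩
    choose e f hef using hd
    refine ⟨by simpa [← Matrix.mul_assoc] using hAM.mul_diagonal d, diagonal e * W, ?_⟩
    -- `e j` inverts `d j` modulo `s_j`, so `diag e · W M D ≡ diag (e * d) ≡ 1`.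
    have hWMD : ColMod S (diagonal e * W * (M * diagonal d)) (diagonal fun j => e j * d j) := by
      simpa [Matrix.mul_assoc] using (hWM.mul_diagonal d).mul_left (diagonal e)
    exact hWMD.trans (ColMod.diagonal_one fun j => ⟨-f j, by linarith [hef j]⟩)

theorem of_ite_mul_col_eq_mul_diagonal {ι R : Type*} [Fintype ι] [DecidableEq ι] [CommRing R]
    (M : Matrix ι ι R) (i : ι) (c : R) :
    (Matrix.of fun r j => if j = i then c * M r i else M r j) =
      M * diagonal (Function.update 1 i c) := by
  ext r j
  by_cases hj : j = i
  · subst hj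
    simp [mul_comm]
  · simp [hj]

theorem smithMassager_mul_div_col_general {n : ℕ}
    (A S M : Matrix (Fin n) (Fin n) ℤ)
    (hM : IsSmithMassager A S M)
    (i : Fin n) (c : ℤ) (hc : Int.gcd c (S i i) = 1) :
    IsSmithMassager A S
      (Matrix.of fun r j => if j = i then c * M r i else M r j) ∧
    ((∀ r, c ∣ M r i) →
      IsSmithMassager A S
        (Matrix.of fun r j => if j = i then M r i / c else M r j)) := by
  have hd : ∀ j, IsCoprime (Function.update (1 : Fin n → ℤ) i c j) (S j j) := by
    intro j
    by_cases hj : j = i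
    · subst hj
      simpa using Int.isCoprime_iff_gcd_eq_one.mpr hc
    · simpa [hj] using isCoprime_one_left
  refine ⟨?_, fun hdvd => ?_⟩
  · rwa [of_ite_mul_col_eq_mul_diagonal, isSmithMassager_mul_diagonal_iff hd]
  · rw [← isSmithMassager_mul_diagonal_iff hd, ← of_ite_mul_col_eq_mul_diagonal]
    convert hM using 1
    ext r j
    by_cases hj : j = i
    · subst hj
      simp [Int.mul_ediv_cancel' (hdvd r)]
    · simp [hj]

/-- Multiplying (or dividing exactly) column `i` of a Smith massager `M` for `A`
by an integer `c` relatively prime to `s_i` yields another Smith massager for `A`. -/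
theorem smithMassager_mul_div_col {n : ℕ}
    (A S M : Matrix (Fin n) (Fin n) ℤ) (hA : A.det ≠ 0)
    (hS : IsSmithForm A S) (hM : IsSmithMassager A S M)
    (i : Fin n) (c : ℤ) (hc : Int.gcd c (S i i) = 1) :
    IsSmithMassager A S
      (Matrix.of fun r j => if j = i then c * M r i else M r j) ∧
    ((∀ r, c ∣ M r i) →
      IsSmithMassager A S
        (Matrix.of fun r j => if j = i then M r i / c else M r j)) :=
  smithMassager_mul_div_col_general A S M hM i c hc
end

section
/- Let A ∈ ℤ^{n×n} be nonsingular with Smith form S = diag(s_1,…,s_n), and let M ∈ ℤ^{n×n} be a Smith massager for A. Then for every row vector v ∈ ℤ^{1×n}, the denominator of the rational row vector v A^{-1} (the smallest positive integer d such that d·(v A^{-1}) has all integer entries) equals the denominator of the rational row vector v M S^{-1}. -/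
open Matrix

/-- A rational vector has all integer entries. -/
def IsIntVec {n : ℕ} (x : Fin n → ℚ) : Prop := ∀ j, ∃ z : ℤ, x j = z

/-!
Write `P A Q = S = diag(s)` with `P`, `Q` unimodular. Then `A⁻¹ = Q S⁻¹ P`, so for an integer
row `x` the row `x A⁻¹` is integral iff `s_j ∣ (x Q)_j` for all `j`, while `x M S⁻¹` is integral
iff `s_j ∣ (x M)_j` for all `j`. Put `B = Q⁻¹ M`, so that `x M = (x Q) B`. The massager conditions
become `S B ≡ 0` and `(W Q) B ≡ I (colmod S)`: right multiplication by `B` induces an endomorphism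
of the finite group `⊕ⱼ ℤ/s_j` that is surjective, hence injective. So `x Q ≡ 0` iff `x M ≡ 0`,
and for `x = d v` this makes the two denominators least elements of the same set.
-/

theorem IsUnimodular.isUnit_det {ι : Type*} [Fintype ι] [DecidableEq ι] {U : Matrix ι ι ℤ}
    (hU : IsUnimodular U) : IsUnit U.det :=
  Int.isUnit_iff.mpr hU

theorem IsUnimodular.isUnit_det_map_intCast {ι : Type*} [Fintype ι] [DecidableEq ι]
    {R : Type*} [CommRing R] {U : Matrix ι ι ℤ} (hU : IsUnimodular U) :
    IsUnit (U.map (Int.cast : ℤ → R)).det := by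
  rw [← Int.cast_det]
  exact hU.isUnit_det.map (Int.castRingHom R)

theorem Matrix.inv_eq_mul_inv_mul_of_mul_mul_eq {ι R : Type*} [Fintype ι] [DecidableEq ι]
    [CommRing R] {P A Q S : Matrix ι ι R} (hP : IsUnit P.det) (hQ : IsUnit Q.det)
    (h : P * A * Q = S) : A⁻¹ = Q * S⁻¹ * P := by
  rw [← h, Matrix.mul_inv_rev, Matrix.mul_inv_rev,
    Matrix.mul_nonsing_inv_cancel_left (A := Q) _ hQ,
    Matrix.nonsing_inv_mul_cancel_right (A := P) _ hP]

section ColMod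

variable {ι : Type*} [Fintype ι]

theorem ColMod.dvd_vecMul_sub {S B C : Matrix ι ι ℤ} (h : ColMod S B C) (z : ι → ℤ) (k : ι) :
    S k k ∣ (z ᵥ* B) k - (z ᵥ* C) k := by
  simp only [vecMul, dotProduct, ← Finset.sum_sub_distrib, ← mul_sub]
  exact Finset.dvd_sum fun i _ => (h i k).mul_left (z i)

theorem ColMod.mul_left_s5 {S B C : Matrix ι ι ℤ} (h : ColMod S B C) (P : Matrix ι ι ℤ) :
    ColMod S (P * B) (P * C) :=
  fun i k => h.dvd_vecMul_sub (P i) k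

variable [DecidableEq ι]

theorem dvd_vecMul_iff_of_colMod {s : ι → ℤ} (hs : ∀ j, s j ≠ 0) {B V : Matrix ι ι ℤ}
    (hB : ColMod (diagonal s) (diagonal s * B) 0) (hV : ColMod (diagonal s) (V * B) 1)
    (y : ι → ℤ) : (∀ k, s k ∣ (y ᵥ* B) k) ↔ ∀ j, s j ∣ y j := by
  set L : AddSubgroup (ι → ℤ) := AddSubgroup.pi Set.univ fun j => AddSubgroup.zmultiples (s j)
  have mem_L (x : ι → ℤ) : x ∈ L ↔ ∀ j, s j ∣ x j := by
    simp [L, AddSubgroup.mem_pi, Int.mem_zmultiples_iff]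
  have : L.FiniteIndex := ⟨by simp [L, Int.index_zmultiples, Finset.prod_ne_zero_iff, hs]⟩
  let f : (ι → ℤ) →+ (ι → ℤ) := (vecMulLinear B).toAddMonoidHom
  have hLf : L ≤ L.comap f := by
    intro x hx
    choose z hz using (mem_L x).1 hx
    have hx : x = z ᵥ* diagonal s := funext fun j => by rw [vecMul_diagonal, hz j, mul_comm]
    refine (mem_L _).2 fun k => ?_
    simpa [f, hx, vecMul_vecMul] using hB.dvd_vecMul_sub z k
  refine ⟨fun hy => ?_, fun hy => (mem_L _).1 (hLf ((mem_L y).2 hy))⟩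
  let φ := QuotientAddGroup.map L L f hLf
  have hφ : Function.Surjective φ := by
    rintro ⟨z⟩
    refine ⟨QuotientAddGroup.mk (z ᵥ* V), QuotientAddGroup.eq_iff_sub_mem.2 <| (mem_L _).2
      fun k => ?_⟩
    simpa [f, vecMul_vecMul] using hV.dvd_vecMul_sub z k
  have hφ_inj : Function.Injective φ := Finite.injective_iff_surjective.2 hφ
  refine (mem_L y).1 <| (QuotientAddGroup.eq_zero_iff y).1 <| hφ_inj ?_
  simpa [φ, f] using (mem_L _).2 hy

end ColMod

section IsIntVec

variable {n : ℕ}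

theorem intCast_vecMul_map_intCast (x : Fin n → ℤ) (N : Matrix (Fin n) (Fin n) ℤ) :
    (fun i => (x i : ℚ)) ᵥ* N.map (Int.cast : ℤ → ℚ) = fun j => ((x ᵥ* N) j : ℚ) :=
  funext fun j => (RingHom.map_vecMul (Int.castRingHom ℚ) N x j).symm

theorem IsIntVec.vecMul_map_intCast {x : Fin n → ℚ} (hx : IsIntVec x)
    (N : Matrix (Fin n) (Fin n) ℤ) : IsIntVec (x ᵥ* N.map (Int.cast : ℤ → ℚ)) := by
  choose z hz using hx
  rw [funext hz, intCast_vecMul_map_intCast]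
  exact fun j => ⟨_, rfl⟩

theorem isIntVec_vecMul_map_intCast_iff {P : Matrix (Fin n) (Fin n) ℤ} (hP : IsUnimodular P)
    (x : Fin n → ℚ) : IsIntVec (x ᵥ* P.map (Int.cast : ℤ → ℚ)) ↔ IsIntVec x := by
  refine ⟨fun hx => ?_, fun hx => hx.vecMul_map_intCast P⟩
  simpa [vecMul_vecMul, ← map_mul_intCast, Matrix.mul_nonsing_inv _ hP.isUnit_det]
    using hx.vecMul_map_intCast P⁻¹

theorem isIntVec_intCast_vecMul_inv_diagonal_iff {s : Fin n → ℤ} (hs : ∀ j, s j ≠ 0)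
    (y : Fin n → ℤ) :
    IsIntVec ((fun i => (y i : ℚ)) ᵥ* ((diagonal s).map (Int.cast : ℤ → ℚ))⁻¹) ↔
      ∀ j, s j ∣ y j := by
  have hs' (j : Fin n) : (s j : ℚ) ≠ 0 := Int.cast_ne_zero.2 (hs j)
  have hinv : ((diagonal s).map (Int.cast : ℤ → ℚ))⁻¹ = diagonal fun j => (s j : ℚ)⁻¹ :=
    inv_eq_right_inv <| by
      rw [diagonal_map Int.cast_zero, diagonal_mul_diagonal, ← diagonal_one]
      exact congrArg diagonal (funext fun j => mul_inv_cancel₀ (hs' j))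
  refine forall_congr' fun j => ?_
  simp only [hinv, vecMul_diagonal, ← div_eq_mul_inv, div_eq_iff (hs' j)]
  constructor
  · rintro ⟨z, hz⟩
    exact ⟨z, by exact_mod_cast hz.trans (mul_comm _ _)⟩
  · rintro ⟨z, hz⟩
    exact ⟨z, by rw [hz]; push_cast; ring⟩

end IsIntVec

theorem isIntVec_intCast_vecMul_inv_iff_of_mul_mul_eq_diagonal {n : ℕ}
    {A P Q : Matrix (Fin n) (Fin n) ℤ} {s : Fin n → ℤ} (hs : ∀ j, s j ≠ 0)
    (hP : IsUnimodular P) (hQ : IsUnimodular Q) (h : P * A * Q = diagonal s) (x : Fin n → ℤ) :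
    IsIntVec ((fun i => (x i : ℚ)) ᵥ* (A.map (Int.cast : ℤ → ℚ))⁻¹) ↔ ∀ j, s j ∣ (x ᵥ* Q) j := by
  have hinv := inv_eq_mul_inv_mul_of_mul_mul_eq hP.isUnit_det_map_intCast
    hQ.isUnit_det_map_intCast (S := (diagonal s).map (Int.cast : ℤ → ℚ))
    (by rw [← map_mul_intCast, ← map_mul_intCast, h])
  rw [hinv, ← vecMul_vecMul, isIntVec_vecMul_map_intCast_iff hP, ← vecMul_vecMul,
    intCast_vecMul_map_intCast, isIntVec_intCast_vecMul_inv_diagonal_iff hs]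

theorem IsSmithMassager.dvd_vecMul_iff {ι : Type*} [Fintype ι] [DecidableEq ι]
    {A P Q M : Matrix ι ι ℤ} {s : ι → ℤ} (hs : ∀ j, s j ≠ 0) (hQ : IsUnit Q.det)
    (h : P * A * Q = diagonal s) (hM : IsSmithMassager A (diagonal s) M) (x : ι → ℤ) :
    (∀ j, s j ∣ (x ᵥ* M) j) ↔ ∀ j, s j ∣ (x ᵥ* Q) j := by
  obtain ⟨hAM, W, hWM⟩ := hM
  set B := Q⁻¹ * M
  have hQB : Q * B = M := Matrix.mul_nonsing_inv_cancel_left (A := Q) M hQ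
  have hSB : diagonal s * B = P * (A * M) := by
    rw [← h, ← hQB, Matrix.mul_assoc, Matrix.mul_assoc]
  rw [← hQB, ← vecMul_vecMul]
  refine dvd_vecMul_iff_of_colMod hs (V := W * Q) ?_ (by rwa [Matrix.mul_assoc, hQB]) _
  rw [hSB, ← Matrix.mul_zero P]
  exact hAM.mul_left_s5 P

theorem denominator_vecMul_inv_eq_denominator_vecMul_massager_general {n : ℕ}
    (A S M : Matrix (Fin n) (Fin n) ℤ)
    (hS : IsSmithForm A S) (hM : IsSmithMassager A S M)
    (v : Fin n → ℤ) (d₁ d₂ : ℤ)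
    (h₁ : IsLeast {d : ℤ | 0 < d ∧
      IsIntVec ((d : ℚ) • Matrix.vecMul (fun i => (v i : ℚ))
        (A.map (Int.cast : ℤ → ℚ))⁻¹)} d₁)
    (h₂ : IsLeast {d : ℤ | 0 < d ∧
      IsIntVec ((d : ℚ) • Matrix.vecMul (fun i => (v i : ℚ))
        (M.map (Int.cast : ℤ → ℚ) * (S.map (Int.cast : ℤ → ℚ))⁻¹))} d₂) :
    d₁ = d₂ := by
  obtain ⟨hSdiag, hSpos, -, P, Q, hP, hQ, hPAQ⟩ := hS
  obtain ⟨s, rfl⟩ : ∃ s, S = diagonal s := ⟨S.diag, (IsDiag.diagonal_diag hSdiag).symm⟩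
  have hs (j : Fin n) : s j ≠ 0 := by simpa using (hSpos j).ne'
  have hsmul (d : ℤ) (N : Matrix (Fin n) (Fin n) ℚ) :
      (d : ℚ) • (fun i => (v i : ℚ)) ᵥ* N = (fun i => ((d • v) i : ℚ)) ᵥ* N := by
    rw [← smul_vecMul]
    congr 1
    ext i
    simp
  simp only [hsmul] at h₁ h₂
  simp only [isIntVec_intCast_vecMul_inv_iff_of_mul_mul_eq_diagonal hs hP hQ hPAQ,
    ← vecMul_vecMul, intCast_vecMul_map_intCast, isIntVec_intCast_vecMul_inv_diagonal_iff hs,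
    hM.dvd_vecMul_iff hs hQ.isUnit_det hPAQ] at h₁ h₂
  exact h₁.unique h₂

/-- For a Smith massager `M` of `A`, the denominator of `v A⁻¹`
(the least positive integer clearing all denominators) equals the
denominator of `v M S⁻¹`. -/
theorem denominator_vecMul_inv_eq_denominator_vecMul_massager {n : ℕ}
    (A S M : Matrix (Fin n) (Fin n) ℤ) (hA : A.det ≠ 0)
    (hS : IsSmithForm A S) (hM : IsSmithMassager A S M)
    (v : Fin n → ℤ) (d₁ d₂ : ℤ)
    (h₁ : IsLeast {d : ℤ | 0 < d ∧
      IsIntVec ((d : ℚ) • Matrix.vecMul (fun i => (v i : ℚ))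
        (A.map (Int.cast : ℤ → ℚ))⁻¹)} d₁)
    (h₂ : IsLeast {d : ℤ | 0 < d ∧
      IsIntVec ((d : ℚ) • Matrix.vecMul (fun i => (v i : ℚ))
        (M.map (Int.cast : ℤ → ℚ) * (S.map (Int.cast : ℤ → ℚ))⁻¹))} d₂) :
    d₁ = d₂ :=
  denominator_vecMul_inv_eq_denominator_vecMul_massager_general A S M hS hM v d₁ d₂ h₁ h₂
end

section
/- Let c be a positive integer and let A ∈ ℤ^{n×n} be nonsingular with Smith form S = diag(s_1,…,s_n), so that cS is the Smith form of cA. If M ∈ ℤ^{n×n} is a Smith massager for cA, then M is also a Smith massager for A. -/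
open Matrix

namespace ColMod

variable {ι : Type*} [Fintype ι] {S B C : Matrix ι ι ℤ}

theorem of_smul_modulus (c : ℤ) (h : ColMod (c • S) B C) : ColMod S B C :=
  fun i j => (dvd_mul_left (S j j) c).trans (h i j)

theorem smul_smul_iff {c : ℤ} (hc : c ≠ 0) : ColMod (c • S) (c • B) (c • C) ↔ ColMod S B C := by
  refine forall₂_congr fun i j => ?_
  simp only [Matrix.smul_apply, smul_eq_mul, ← mul_sub]
  exact mul_dvd_mul_iff_left hc

end ColMod

theorem smithMassager_of_smul_general {n : ℕ}
    (c : ℤ) (hc : 0 < c) (A S M : Matrix (Fin n) (Fin n) ℤ)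
    (hM : IsSmithMassager (c • A) (c • S) M) :
    IsSmithMassager A S M := by
  obtain ⟨hAM, W, hWM⟩ := hM
  refine ⟨?_, W, hWM.of_smul_modulus c⟩
  rw [← ColMod.smul_smul_iff hc.ne', ← smul_mul, smul_zero]
  exact hAM

/-- If `M` is a Smith massager for `cA` (with Smith form `cS`), then `M` is also a
Smith massager for `A`. -/
theorem smithMassager_of_smul {n : ℕ}
    (c : ℤ) (hc : 0 < c) (A S M : Matrix (Fin n) (Fin n) ℤ)
    (hA : A.det ≠ 0) (hS : IsSmithForm A S)
    (hM : IsSmithMassager (c • A) (c • S) M) :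
    IsSmithMassager A S M :=
  smithMassager_of_smul_general c hc A S M hM
end

section
/- Let A ∈ ℤ^{n×n} be nonsingular with Smith form S = diag(s_1,…,s_n), and let V ∈ ℤ^{n×n} be a unimodular Smith massager for A. Then the matrix U := A·V·S^{-1} (computed over ℚ) has integer entries, is unimodular, and satisfies AV = US. -/
/-! Since `S` is diagonal, `A V ≡ 0 (colmod S)` says exactly that `A V = U S` for an integer
matrix `U`. Taking determinants, `det A` and `det S` are associates and nonzero, so
`det U` is an associate of the unit `det V`. -/

open Matrix

theorem isUnimodular_iff_isUnit_det {ι : Type*} [Fintype ι] [DecidableEq ι]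
    (U : Matrix ι ι ℤ) : IsUnimodular U ↔ IsUnit U.det :=
  Int.isUnit_iff.symm

theorem ColMod.exists_eq_mul_diagonal_of_zero {ι : Type*} [Fintype ι] [DecidableEq ι]
    {S B : Matrix ι ι ℤ} (h : ColMod S B 0) :
    ∃ U : Matrix ι ι ℤ, B = U * diagonal (fun j => S j j) := by
  choose U hU using fun i j => by simpa using h i j
  exact ⟨of U, by ext i j; simp [hU i j, mul_comm]⟩

theorem map_intCast_eq_mul_mul_inv_of_mul_eq_mul {ι : Type*} [Fintype ι] [DecidableEq ι]
    {K : Type*} [Field K] [CharZero K] {A V U S : Matrix ι ι ℤ} (hS : S.det ≠ 0)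
    (h : A * V = U * S) :
    U.map (Int.cast : ℤ → K) = A.map Int.cast * V.map Int.cast * (S.map Int.cast)⁻¹ := by
  have hSK : IsUnit (S.map (Int.cast : ℤ → K)).det := by
    rw [← Int.cast_det]
    exact isUnit_iff_ne_zero.mpr (Int.cast_ne_zero.mpr hS)
  have hK : A.map (Int.cast : ℤ → K) * V.map Int.cast = U.map Int.cast * S.map Int.cast := by
    have := congrArg (Matrix.map · (Int.castRingHom K)) h
    rwa [Matrix.map_mul, Matrix.map_mul] at this
  rw [hK, mul_nonsing_inv_cancel_right _ _ hSK]

namespace IsSmithForm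

variable {n : ℕ} {A S : Matrix (Fin n) (Fin n) ℤ}

theorem eq_diagonal (hS : IsSmithForm A S) : S = diagonal (fun i => S i i) := by
  ext i j
  obtain rfl | hij := eq_or_ne i j
  · simp
  · simp [hS.1 i j hij, hij]

theorem det_pos (hS : IsSmithForm A S) : 0 < S.det := by
  rw [hS.eq_diagonal, det_diagonal]
  exact Finset.prod_pos fun i _ => hS.2.1 i

theorem associated_det (hS : IsSmithForm A S) : Associated A.det S.det := by
  obtain ⟨-, -, -, P, Q, hP, hQ, rfl⟩ := hS
  rw [isUnimodular_iff_isUnit_det] at hP hQ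
  rw [det_mul, det_mul, mul_comm P.det, mul_assoc]
  exact (associated_mul_unit_left _ _ (hP.mul hQ)).symm

end IsSmithForm

theorem isUnimodular_of_mul_eq_mul_smithForm {n : ℕ} {A S V U : Matrix (Fin n) (Fin n) ℤ}
    (hS : IsSmithForm A S) (hV : IsUnimodular V) (h : A * V = U * S) : IsUnimodular U := by
  rw [isUnimodular_iff_isUnit_det] at hV ⊢
  have hdet : Associated (S.det * U.det) (A.det * V.det) := by
    rw [mul_comm, ← det_mul, ← det_mul, h]
  exact (hdet.of_mul_left hS.associated_det.symm hS.det_pos.ne').isUnit_iff.mpr hV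

theorem unimodular_U_of_unimodular_massager_general {n : ℕ}
    (A S V : Matrix (Fin n) (Fin n) ℤ)
    (hS : IsSmithForm A S) (hV : IsUnimodular V)
    (hVM : IsSmithMassager A S V) :
    ∃ U : Matrix (Fin n) (Fin n) ℤ,
      U.map (Int.cast : ℤ → ℚ) =
        A.map (Int.cast : ℤ → ℚ) * V.map (Int.cast : ℤ → ℚ) *
          (S.map (Int.cast : ℤ → ℚ))⁻¹ ∧
      IsUnimodular U ∧ A * V = U * S := by
  obtain ⟨U, hU⟩ := hVM.1.exists_eq_mul_diagonal_of_zero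
  rw [← hS.eq_diagonal] at hU
  exact ⟨U, map_intCast_eq_mul_mul_inv_of_mul_eq_mul hS.det_pos.ne' hU,
    isUnimodular_of_mul_eq_mul_smithForm hS hV hU, hU⟩

/-- If `V` is a unimodular Smith massager for `A`, then `U := A V S⁻¹` is integral,
unimodular, and satisfies `A V = U S`. -/
theorem unimodular_U_of_unimodular_massager {n : ℕ}
    (A S V : Matrix (Fin n) (Fin n) ℤ) (hA : A.det ≠ 0)
    (hS : IsSmithForm A S) (hV : IsUnimodular V)
    (hVM : IsSmithMassager A S V) :
    ∃ U : Matrix (Fin n) (Fin n) ℤ,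
      U.map (Int.cast : ℤ → ℚ) =
        A.map (Int.cast : ℤ → ℚ) * V.map (Int.cast : ℤ → ℚ) *
          (S.map (Int.cast : ℤ → ℚ))⁻¹ ∧
      IsUnimodular U ∧ A * V = U * S :=
  unimodular_U_of_unimodular_massager_general A S V hS hV hVM
end
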